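/- arXiv:0910.2517 — 7 statements merged into one kernel-verified Lean document; each statement's English description precedes it below -/
import Mathlib

section
/- Let b > 0 and let t ≥ 0, and let S, T be finite sets. If t² - (2b√|S∪T|/√n) t + (3b²(|S|-|T|))/n ≤ 0, then t ≤ 3b√|T|/√n. -/
/-- Cauchy–Schwarz in the form `9r² - x² ≥ (3/2)((x - a)² + 2a²) - x² = (3a - x)²/2`. -/
theorem le_three_mul_of_sq_sub_add_two_mul_sq_le {x a r : ℝ} (hr : 0 ≤ r)
    (h : (x - a) ^ 2 + 2 * a ^ 2 ≤ 6 * r ^ 2) : x ≤ 3 * r := by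
  have hsq : x ^ 2 ≤ (3 * r) ^ 2 := by nlinarith [sq_nonneg (3 * a - x)]
  exact (abs_le_of_sq_le_sq' hsq (by positivity)).2

theorem quadratic_bound_general (n b t : ℝ) (S T : Finset ℕ) (hn : 0 < n) (hb : 0 < b)
    (h : t ^ 2 - (2 * b * Real.sqrt ((S ∪ T).card) / Real.sqrt n) * t
        + 3 * b ^ 2 * ((S.card : ℝ) - (T.card : ℝ)) / n ≤ 0) :
    t ≤ 3 * b * Real.sqrt (T.card) / Real.sqrt n := by
  obtain ⟨m, hm, rfl⟩ : ∃ m, 0 < m ∧ n = m ^ 2 :=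
    ⟨√n, Real.sqrt_pos.mpr hn, (Real.sq_sqrt hn.le).symm⟩
  rw [Real.sqrt_sq hm.le] at h ⊢
  have hunion : ((S ∪ T).card : ℝ) ≤ S.card + T.card := by
    exact_mod_cast Finset.card_union_le S T
  have hsq_union : √((S ∪ T).card : ℝ) ^ 2 = (S ∪ T).card := Real.sq_sqrt (by positivity)
  have hsq_T : √(T.card : ℝ) ^ 2 = T.card := Real.sq_sqrt (by positivity)
  have hcleared : (t * m) ^ 2 - 2 * (b * √((S ∪ T).card : ℝ)) * (t * m)
      + 3 * b ^ 2 * ((S.card : ℝ) - T.card) ≤ 0 := by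
    have hscaled := mul_nonpos_of_nonneg_of_nonpos (sq_nonneg m) h
    field_simp at hscaled
    linarith
  -- With `|S| ≥ |S ∪ T| - |T|` the cleared inequality reads `(tm - ba)² + 2(ba)² ≤ 6(br)²`,
  -- where `a = √|S ∪ T|` and `r = √|T|`.
  rw [le_div_iff₀ hm, mul_assoc]
  refine le_three_mul_of_sq_sub_add_two_mul_sq_le (a := b * √((S ∪ T).card : ℝ))
    (by positivity) ?_
  nlinarith

/-- The key quadratic inequality: if `t ≥ 0` satisfies
`t² - (2b√|S∪T|/√n)t + 3b²(|S|-|T|)/n ≤ 0` then `t ≤ 3b√|T|/√n`. -/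
theorem quadratic_bound (n b t : ℝ) (S T : Finset ℕ) (hn : 0 < n) (hb : 0 < b) (ht : 0 ≤ t)
    (h : t ^ 2 - (2 * b * Real.sqrt ((S ∪ T).card) / Real.sqrt n) * t
        + 3 * b ^ 2 * ((S.card : ℝ) - (T.card : ℝ)) / n ≤ 0) :
    t ≤ 3 * b * Real.sqrt (T.card) / Real.sqrt n :=
  quadratic_bound_general n b t S T hn hb h
end

section
/- Let X be an n×p real matrix with nonzero columns V₁,…,V_p, and let μ(X) = max over i<j of |Vᵢᵀ V_j|/(‖Vᵢ‖₂‖V_j‖₂) > 0. Fix ν ∈ [0,1]. If u ∈ ℝᵖ has support of size at most (1-ν)(1 + 1/μ(X)), then ‖Xu‖₂² ≥ ν(1+μ(X)) Σⱼ |u_j|² ‖V_j‖₂². -/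
/-!
Write `Vⱼ` for the columns of `X` and `aⱼ = |uⱼ| ‖Vⱼ‖`. Expanding `‖Xu‖² = ∑ᵢ ∑ⱼ uᵢ uⱼ ⟪Vᵢ, Vⱼ⟫`,
the diagonal contributes `∑ aⱼ²` and, by the coherence bound, each off-diagonal term is at least
`-μ aᵢ aⱼ`, so `‖Xu‖² ≥ (1 + μ) ∑ aⱼ² - μ (∑ aⱼ)²`. Cauchy–Schwarz over the support `s` of `u`
gives `(∑ aⱼ)² ≤ |s| ∑ aⱼ²`, and `μ |s| ≤ (1 - ν)(1 + μ)` is the sparsity hypothesis.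
-/

open Finset Matrix RealInnerProductSpace

theorem sq_sum_le_card_mul_sum_sq_of_support_subset {ι : Type*} [Fintype ι] {f : ι → ℝ}
    {s : Finset ι} (hf : ∀ j ∉ s, f j = 0) :
    (∑ j, f j) ^ 2 ≤ #s * ∑ j, f j ^ 2 := by
  have hsum : ∑ j ∈ s, f j = ∑ j, f j :=
    sum_subset (subset_univ s) fun j _ hj => hf j hj
  have hsum_sq : ∑ j ∈ s, f j ^ 2 = ∑ j, f j ^ 2 :=
    sum_subset (subset_univ s) fun j _ hj => by simp [hf j hj]
  rw [← hsum, ← hsum_sq]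
  exact sq_sum_le_card_mul_sum_sq

section Coherence

variable {ι E : Type*} [Fintype ι] [NormedAddCommGroup E] [InnerProductSpace ℝ E]

theorem norm_sum_smul_sq_eq_sum_sum_inner (V : ι → E) (u : ι → ℝ) :
    ‖∑ j, u j • V j‖ ^ 2 = ∑ i, ∑ j, u i * u j * ⟪V i, V j⟫ := by
  rw [← real_inner_self_eq_norm_sq, sum_inner]
  simp only [inner_sum, real_inner_smul_left, real_inner_smul_right]
  exact sum_congr rfl fun i _ => sum_congr rfl fun j _ => by ring

variable [DecidableEq ι] {V : ι → E} {μ : ℝ}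

theorem sub_sq_sum_le_norm_sum_smul_sq
    (hcoh : ∀ i j, i ≠ j → |⟪V i, V j⟫| ≤ μ * ‖V i‖ * ‖V j‖) (u : ι → ℝ) :
    (1 + μ) * ∑ j, u j ^ 2 * ‖V j‖ ^ 2 - μ * (∑ j, |u j| * ‖V j‖) ^ 2 ≤
      ‖∑ j, u j • V j‖ ^ 2 := by
  set a : ι → ℝ := fun j => |u j| * ‖V j‖
  have hdiag : ∀ j, u j ^ 2 * ‖V j‖ ^ 2 = a j * a j := fun j => by
    simp only [a]; rw [← sq_abs (u j)]; ring
  have hterm : ∀ i j, (1 + μ) * (if i = j then a i * a j else 0) - μ * (a i * a j) ≤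
      u i * u j * ⟪V i, V j⟫ := by
    intro i j
    by_cases hij : i = j
    · subst hij
      rw [if_pos rfl, real_inner_self_eq_norm_sq, ← hdiag]
      exact le_of_eq (by ring)
    · rw [if_neg hij]
      have habs : |u i * u j * ⟪V i, V j⟫| ≤ μ * (a i * a j) := by
        rw [abs_mul, abs_mul]
        calc |u i| * |u j| * |⟪V i, V j⟫| ≤ |u i| * |u j| * (μ * ‖V i‖ * ‖V j‖) := by
              gcongr; exact hcoh i j hij
          _ = μ * (a i * a j) := by simp only [a]; ring
      linarith [neg_abs_le (u i * u j * ⟪V i, V j⟫)]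
  calc (1 + μ) * ∑ j, u j ^ 2 * ‖V j‖ ^ 2 - μ * (∑ j, a j) ^ 2
      = ∑ i, ∑ j, ((1 + μ) * (if i = j then a i * a j else 0) - μ * (a i * a j)) := by
        rw [sum_congr rfl fun j _ => hdiag j]
        simp only [sum_sub_distrib, ← mul_sum, sum_ite_eq, mem_univ, if_true, sq, sum_mul_sum]
    _ ≤ ∑ i, ∑ j, u i * u j * ⟪V i, V j⟫ :=
        sum_le_sum fun i _ => sum_le_sum fun j _ => hterm i j
    _ = ‖∑ j, u j • V j‖ ^ 2 := (norm_sum_smul_sq_eq_sum_sum_inner V u).symm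

theorem mul_sum_sq_le_norm_sum_smul_sq_of_support_subset (hμ : 0 ≤ μ)
    (hcoh : ∀ i j, i ≠ j → |⟪V i, V j⟫| ≤ μ * ‖V i‖ * ‖V j‖) {u : ι → ℝ} {s : Finset ι}
    (hu : ∀ j ∉ s, u j = 0) :
    (1 + μ - μ * #s) * ∑ j, u j ^ 2 * ‖V j‖ ^ 2 ≤ ‖∑ j, u j • V j‖ ^ 2 := by
  have hcs : (∑ j, |u j| * ‖V j‖) ^ 2 ≤ #s * ∑ j, u j ^ 2 * ‖V j‖ ^ 2 := by
    simpa only [mul_pow, sq_abs] using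
      sq_sum_le_card_mul_sum_sq_of_support_subset (f := fun j => |u j| * ‖V j‖)
        fun j hj => by simp [hu j hj]
  calc (1 + μ - μ * #s) * ∑ j, u j ^ 2 * ‖V j‖ ^ 2
      = (1 + μ) * ∑ j, u j ^ 2 * ‖V j‖ ^ 2 - μ * (#s * ∑ j, u j ^ 2 * ‖V j‖ ^ 2) := by ring
    _ ≤ (1 + μ) * ∑ j, u j ^ 2 * ‖V j‖ ^ 2 - μ * (∑ j, |u j| * ‖V j‖) ^ 2 := by gcongr
    _ ≤ ‖∑ j, u j • V j‖ ^ 2 := sub_sq_sum_le_norm_sum_smul_sq hcoh u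

end Coherence

namespace Matrix

variable {m n : Type*}

theorem norm_toLp_transpose_apply [Fintype m] (X : Matrix m n ℝ) (j : n) :
    ‖WithLp.toLp 2 (Xᵀ j)‖ = √(∑ i, X i j ^ 2) := by
  simp [EuclideanSpace.norm_eq]

theorem inner_toLp_transpose_apply [Fintype m] (X : Matrix m n ℝ) (i j : n) :
    ⟪WithLp.toLp 2 (Xᵀ i), WithLp.toLp 2 (Xᵀ j)⟫ = ∑ k, X k i * X k j := by
  simp [PiLp.inner_apply, mul_comm]

theorem sum_smul_toLp_transpose_apply [Fintype n] (X : Matrix m n ℝ) (u : n → ℝ) :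
    ∑ j, u j • WithLp.toLp 2 (Xᵀ j) = WithLp.toLp 2 (X *ᵥ u) := by
  ext i
  simp [mulVec, dotProduct, mul_comm]

end Matrix

theorem separable_one_general (n p : ℕ) (X : Matrix (Fin n) (Fin p) ℝ) (μ ν : ℝ)
    (hμ : 0 < μ)
    (hcoh : ∀ i j : Fin p, i ≠ j →
      |∑ k, X k i * X k j| ≤ μ * Real.sqrt (∑ k, X k i ^ 2) * Real.sqrt (∑ k, X k j ^ 2))
    (u : Fin p → ℝ)
    (hspt : ((Finset.univ.filter fun j => u j ≠ 0).card : ℝ) ≤ (1 - ν) * (1 + 1 / μ)) :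
    ν * (1 + μ) * ∑ j, u j ^ 2 * ∑ i, X i j ^ 2 ≤ ∑ i, (∑ j, X i j * u j) ^ 2 := by
  set s := Finset.univ.filter fun j => u j ≠ 0
  set V : Fin p → EuclideanSpace ℝ (Fin n) := fun j => WithLp.toLp 2 (Xᵀ j)
  have hV : ∀ i j, i ≠ j → |⟪V i, V j⟫| ≤ μ * ‖V i‖ * ‖V j‖ := fun i j hij => by
    simpa only [V, inner_toLp_transpose_apply, norm_toLp_transpose_apply] using hcoh i j hij
  have hnorm_sq : ∀ j, ‖V j‖ ^ 2 = ∑ i, X i j ^ 2 := fun j => by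
    rw [norm_toLp_transpose_apply, Real.sq_sqrt (by positivity)]
  have hbound := mul_sum_sq_le_norm_sum_smul_sq_of_support_subset hμ.le hV (u := u) (s := s)
    fun j hj => by simpa [s] using hj
  rw [sum_smul_toLp_transpose_apply, EuclideanSpace.real_norm_sq_eq] at hbound
  simp only [hnorm_sq, mulVec, dotProduct] at hbound
  have hcard : μ * #s ≤ (1 - ν) * (1 + μ) :=
    calc μ * #s ≤ μ * ((1 - ν) * (1 + 1 / μ)) := mul_le_mul_of_nonneg_left hspt hμ.le
      _ = (1 - ν) * (1 + μ) := by field_simp; ring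
  calc ν * (1 + μ) * ∑ j, u j ^ 2 * ∑ i, X i j ^ 2
      ≤ (1 + μ - μ * #s) * ∑ j, u j ^ 2 * ∑ i, X i j ^ 2 := by gcongr; linarith
    _ ≤ ∑ i, (∑ j, X i j * u j) ^ 2 := hbound

/-- Separability: if `|spt(u)| ≤ (1-ν)(1+1/μ(X))` then
`‖Xu‖₂² ≥ ν(1+μ(X)) Σⱼ |u_j|² ‖V_j‖₂²`. -/
theorem separable_one (n p : ℕ) (X : Matrix (Fin n) (Fin p) ℝ) (μ ν : ℝ)
    (hcol : ∀ j, ∃ i, X i j ≠ 0) (hμ : 0 < μ)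
    (hcoh : ∀ i j : Fin p, i ≠ j →
      |∑ k, X k i * X k j| ≤ μ * Real.sqrt (∑ k, X k i ^ 2) * Real.sqrt (∑ k, X k j ^ 2))
    (hcoh_max : ∃ i j : Fin p, i ≠ j ∧
      |∑ k, X k i * X k j| = μ * Real.sqrt (∑ k, X k i ^ 2) * Real.sqrt (∑ k, X k j ^ 2))
    (hν : ν ∈ Set.Icc (0 : ℝ) 1) (u : Fin p → ℝ)
    (hspt : ((Finset.univ.filter fun j => u j ≠ 0).card : ℝ) ≤ (1 - ν) * (1 + 1 / μ)) :
    ν * (1 + μ) * ∑ j, u j ^ 2 * ∑ i, X i j ^ 2 ≤ ∑ i, (∑ j, X i j * u j) ^ 2 :=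
  separable_one_general n p X μ ν hμ hcoh u hspt
end

section
/- Let X be an n×p real matrix with nonzero columns and coherence μ(X) > 0. Fix ν ∈ [0,1]. If u, v ∈ ℝᵖ satisfy |spt(u) ∪ spt(v)| ≤ (1-ν)(1+1/μ(X)), then ‖X(u-v)‖₂² ≥ ν(1+μ(X)) Σⱼ |u_j - v_j|² ‖V_j‖₂². In particular this holds if both |spt(u)| and |spt(v)| are at most (1-ν)(1+1/μ(X))/2. -/
/-!
Write `a_j = |u_j - v_j| ‖V_j‖` and let `S` be the union of the supports. Expanding
`‖X(u - v)‖² = ∑_{j,k} (u_j - v_j)(u_k - v_k) ⟪V_j, V_k⟫` and bounding every off-diagonal term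
from below by `-μ a_j a_k` gives `‖X(u - v)‖² ≥ (1 + μ) ∑ a_j² - μ (∑ a_j)²`, and Cauchy–Schwarz on
`S` gives `(∑ a_j)² ≤ |S| ∑ a_j²`. Hence `‖X(u - v)‖² ≥ (1 + μ - μ|S|) ∑ a_j²`, and the hypothesis
on `|S|` says exactly that `1 + μ - μ|S| ≥ ν(1 + μ)`.
-/

open Finset RealInnerProductSpace

section Coherence

variable {ι E : Type*} [NormedAddCommGroup E] [InnerProductSpace ℝ E]

/-- `μ` bounds the mutual coherence `max_{j ≠ k} |cos ∠(x j, x k)|` of `x`. -/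
def CoherenceLE (μ : ℝ) (x : ι → E) : Prop :=
  Pairwise fun j k => |⟪x j, x k⟫| ≤ μ * ‖x j‖ * ‖x k‖

theorem CoherenceLE.smul {μ : ℝ} {x : ι → E} (h : CoherenceLE μ x) (w : ι → ℝ) :
    CoherenceLE μ fun j => w j • x j := by
  intro j k hjk
  calc |⟪w j • x j, w k • x k⟫| = |w j| * |w k| * |⟪x j, x k⟫| := by
        rw [real_inner_smul_left, real_inner_smul_right, abs_mul, abs_mul, mul_assoc]
    _ ≤ |w j| * |w k| * (μ * ‖x j‖ * ‖x k‖) := by gcongr; exact h hjk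
    _ = μ * ‖w j • x j‖ * ‖w k • x k‖ := by simp only [norm_smul, Real.norm_eq_abs]; ring

variable [Fintype ι]

theorem CoherenceLE.sub_le_norm_sum_sq {μ : ℝ} {x : ι → E} (h : CoherenceLE μ x) :
    (1 + μ) * ∑ j, ‖x j‖ ^ 2 - μ * (∑ j, ‖x j‖) ^ 2 ≤ ‖∑ j, x j‖ ^ 2 := by
  classical
  -- On the diagonal `⟪x j, x j⟫ = (1 + μ) ‖x j‖² - μ ‖x j‖²`, so one formula covers all terms.
  have hterm : ∀ j k, (if j = k then (1 + μ) * ‖x j‖ ^ 2 else 0) - μ * (‖x j‖ * ‖x k‖)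
      ≤ ⟪x j, x k⟫ := by
    intro j k
    by_cases hjk : j = k
    · subst hjk
      rw [if_pos rfl, real_inner_self_eq_norm_sq]
      exact le_of_eq (by ring)
    · rw [if_neg hjk]
      linarith [neg_abs_le ⟪x j, x k⟫, h hjk]
  calc (1 + μ) * ∑ j, ‖x j‖ ^ 2 - μ * (∑ j, ‖x j‖) ^ 2
      = ∑ j, ∑ k, ((if j = k then (1 + μ) * ‖x j‖ ^ 2 else 0) - μ * (‖x j‖ * ‖x k‖)) := by
        rw [sq (∑ j, ‖x j‖), sum_mul_sum]
        simp only [sum_sub_distrib, sum_ite_eq, mem_univ, if_true, ← mul_sum]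
    _ ≤ ∑ j, ∑ k, ⟪x j, x k⟫ := sum_le_sum fun j _ => sum_le_sum fun k _ => hterm j k
    _ = ‖∑ j, x j‖ ^ 2 := by
        rw [← real_inner_self_eq_norm_sq, sum_inner]
        simp only [inner_sum]

theorem CoherenceLE.mul_sum_norm_sq_le_norm_sum_sq {μ : ℝ} {x : ι → E} (h : CoherenceLE μ x)
    (hμ : 0 ≤ μ) {S : Finset ι} (hS : ∀ j ∉ S, x j = 0) :
    (1 + μ - μ * #S) * ∑ j, ‖x j‖ ^ 2 ≤ ‖∑ j, x j‖ ^ 2 := by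
  have hCS : (∑ j, ‖x j‖) ^ 2 ≤ #S * ∑ j, ‖x j‖ ^ 2 := by
    rw [← sum_subset (subset_univ S) fun j _ hj => by simp [hS j hj],
      ← sum_subset (subset_univ S) fun j _ hj => by simp [hS j hj]]
    exact sq_sum_le_card_mul_sum_sq
  nlinarith [h.sub_le_norm_sum_sq]

end Coherence

namespace Matrix

variable {m ι : Type*} [Fintype m]

noncomputable def euclideanCol (X : Matrix m ι ℝ) (j : ι) : EuclideanSpace ℝ m :=
  WithLp.toLp 2 (Xᵀ j)

theorem coherenceLE_euclideanCol {X : Matrix m ι ℝ} {μ : ℝ}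
    (hcoh : ∀ i j : ι, i ≠ j →
      |∑ k, X k i * X k j| ≤ μ * √(∑ k, X k i ^ 2) * √(∑ k, X k j ^ 2)) :
    CoherenceLE μ X.euclideanCol := by
  intro i j hij
  simpa [euclideanCol, PiLp.inner_apply, EuclideanSpace.norm_eq, mul_comm] using hcoh i j hij

theorem one_add_sub_mul_card_mul_le_sum_sq [Fintype ι] {X : Matrix m ι ℝ} {μ : ℝ}
    (hμ : 0 ≤ μ)
    (hcoh : ∀ i j : ι, i ≠ j →
      |∑ k, X k i * X k j| ≤ μ * √(∑ k, X k i ^ 2) * √(∑ k, X k j ^ 2))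
    {w : ι → ℝ} {S : Finset ι} (hS : ∀ j ∉ S, w j = 0) :
    (1 + μ - μ * #S) * ∑ j, w j ^ 2 * ∑ i, X i j ^ 2 ≤ ∑ i, (∑ j, X i j * w j) ^ 2 := by
  have h := ((coherenceLE_euclideanCol hcoh).smul w).mul_sum_norm_sq_le_norm_sum_sq hμ
    (S := S) fun j hj => by simp [hS j hj]
  have hnorm : ∀ j, ‖w j • X.euclideanCol j‖ ^ 2 = w j ^ 2 * ∑ i, X i j ^ 2 := fun j => by
    simp [euclideanCol, EuclideanSpace.norm_sq_eq, mul_pow, ← mul_sum]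
  have hsum : ‖∑ j, w j • X.euclideanCol j‖ ^ 2 = ∑ i, (∑ j, X i j * w j) ^ 2 := by
    simp [euclideanCol, EuclideanSpace.norm_sq_eq, mul_comm]
  simpa only [hnorm, hsum] using h

theorem mul_sum_le_sum_sq_of_card_le [Fintype ι] {X : Matrix m ι ℝ} {μ ν : ℝ} (hμ : 0 < μ)
    (hcoh : ∀ i j : ι, i ≠ j →
      |∑ k, X k i * X k j| ≤ μ * √(∑ k, X k i ^ 2) * √(∑ k, X k j ^ 2))
    {w : ι → ℝ} {S : Finset ι} (hS : ∀ j ∉ S, w j = 0) (hcard : (#S : ℝ) ≤ (1 - ν) * (1 + 1 / μ)) :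
    ν * (1 + μ) * ∑ j, w j ^ 2 * ∑ i, X i j ^ 2 ≤ ∑ i, (∑ j, X i j * w j) ^ 2 := by
  have hconst : ν * (1 + μ) ≤ 1 + μ - μ * #S := by
    have := mul_le_mul_of_nonneg_left hcard hμ.le
    rw [show μ * ((1 - ν) * (1 + 1 / μ)) = (1 - ν) * (1 + μ) by field_simp; ring] at this
    linarith
  calc ν * (1 + μ) * ∑ j, w j ^ 2 * ∑ i, X i j ^ 2
      ≤ (1 + μ - μ * #S) * ∑ j, w j ^ 2 * ∑ i, X i j ^ 2 := by gcongr
    _ ≤ ∑ i, (∑ j, X i j * w j) ^ 2 := one_add_sub_mul_card_mul_le_sum_sq hμ.le hcoh hS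

end Matrix

theorem separable_pair_general (n p : ℕ) (X : Matrix (Fin n) (Fin p) ℝ) (μ ν : ℝ)
    (hμ : 0 < μ)
    (hcoh : ∀ i j : Fin p, i ≠ j →
      |∑ k, X k i * X k j| ≤ μ * Real.sqrt (∑ k, X k i ^ 2) * Real.sqrt (∑ k, X k j ^ 2)) :
    (∀ u v : Fin p → ℝ,
      (((Finset.univ.filter fun j => u j ≠ 0) ∪ (Finset.univ.filter fun j => v j ≠ 0)).card : ℝ)
          ≤ (1 - ν) * (1 + 1 / μ) →
      ν * (1 + μ) * ∑ j, (u j - v j) ^ 2 * ∑ i, X i j ^ 2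
        ≤ ∑ i, (∑ j, X i j * (u j - v j)) ^ 2) ∧
    (∀ u v : Fin p → ℝ,
      ((Finset.univ.filter fun j => u j ≠ 0).card : ℝ) ≤ (1 - ν) * (1 + 1 / μ) / 2 →
      ((Finset.univ.filter fun j => v j ≠ 0).card : ℝ) ≤ (1 - ν) * (1 + 1 / μ) / 2 →
      ν * (1 + μ) * ∑ j, (u j - v j) ^ 2 * ∑ i, X i j ^ 2
        ≤ ∑ i, (∑ j, X i j * (u j - v j)) ^ 2) := by
  have hunion : ∀ u v : Fin p → ℝ,
      (((univ.filter fun j => u j ≠ 0) ∪ (univ.filter fun j => v j ≠ 0)).card : ℝ)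
          ≤ (1 - ν) * (1 + 1 / μ) →
      ν * (1 + μ) * ∑ j, (u j - v j) ^ 2 * ∑ i, X i j ^ 2
        ≤ ∑ i, (∑ j, X i j * (u j - v j)) ^ 2 := fun u v hS =>
    Matrix.mul_sum_le_sum_sq_of_card_le hμ hcoh (w := u - v) (fun j hj => by
      simp only [mem_union, mem_filter, mem_univ, true_and, not_or, not_not] at hj
      simp [hj.1, hj.2]) hS
  refine ⟨hunion, fun u v hu hv => hunion u v ?_⟩
  calc _ ≤ ((univ.filter fun j => u j ≠ 0).card : ℝ) + (univ.filter fun j => v j ≠ 0).card := by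
        exact_mod_cast card_union_le _ _
    _ ≤ (1 - ν) * (1 + 1 / μ) := by linarith

/-- Separability of pairs: if `|spt(u) ∪ spt(v)| ≤ (1-ν)(1+1/μ(X))` then
`‖X(u-v)‖₂² ≥ ν(1+μ(X)) Σⱼ |u_j - v_j|² ‖V_j‖₂²`; in particular this holds if both
supports have size at most `(1-ν)(1+1/μ(X))/2`. -/
theorem separable_pair (n p : ℕ) (X : Matrix (Fin n) (Fin p) ℝ) (μ ν : ℝ)
    (hcol : ∀ j, ∃ i, X i j ≠ 0) (hμ : 0 < μ)
    (hcoh : ∀ i j : Fin p, i ≠ j →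
      |∑ k, X k i * X k j| ≤ μ * Real.sqrt (∑ k, X k i ^ 2) * Real.sqrt (∑ k, X k j ^ 2))
    (hcoh_max : ∃ i j : Fin p, i ≠ j ∧
      |∑ k, X k i * X k j| = μ * Real.sqrt (∑ k, X k i ^ 2) * Real.sqrt (∑ k, X k j ^ 2))
    (hν : ν ∈ Set.Icc (0 : ℝ) 1) :
    (∀ u v : Fin p → ℝ,
      (((Finset.univ.filter fun j => u j ≠ 0) ∪ (Finset.univ.filter fun j => v j ≠ 0)).card : ℝ)
          ≤ (1 - ν) * (1 + 1 / μ) →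
      ν * (1 + μ) * ∑ j, (u j - v j) ^ 2 * ∑ i, X i j ^ 2
        ≤ ∑ i, (∑ j, X i j * (u j - v j)) ^ 2) ∧
    (∀ u v : Fin p → ℝ,
      ((Finset.univ.filter fun j => u j ≠ 0).card : ℝ) ≤ (1 - ν) * (1 + 1 / μ) / 2 →
      ((Finset.univ.filter fun j => v j ≠ 0).card : ℝ) ≤ (1 - ν) * (1 + 1 / μ) / 2 →
      ν * (1 + μ) * ∑ j, (u j - v j) ^ 2 * ∑ i, X i j ^ 2
        ≤ ∑ i, (∑ j, X i j * (u j - v j)) ^ 2) :=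
  separable_pair_general n p X μ ν hμ hcoh
end

section
/- Let X be an n×p real matrix with nonzero columns and μ(X) > 0, let I ⊂ ℝ be a compact interval, and for h ≥ 1 define D(I,h) = {u ∈ ℝᵖ : Xᵢᵀu ∈ I for all rows i, and |spt(u)| ≤ h}. If h < 1 + 1/μ(X), then D(I,h) is a compact subset of ℝᵖ. -/
set_option maxHeartbeats 1000000 in
/-- If `h < 1 + 1/μ(X)` and `I = [a,b]` is a compact interval, then
`D(I,h) = {u : Xᵢᵀu ∈ I for all i, |spt(u)| ≤ h}` is compact. -/
theorem Dset_compact (n p : ℕ) (X : Matrix (Fin n) (Fin p) ℝ) (μ : ℝ) (a b : ℝ)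
    (hab : a ≤ b) (h : ℕ) (hh : 1 ≤ h)
    (hcol : ∀ j, ∃ i, X i j ≠ 0) (hμ : 0 < μ)
    (hcoh : ∀ i j : Fin p, i ≠ j →
      |∑ k, X k i * X k j| ≤ μ * Real.sqrt (∑ k, X k i ^ 2) * Real.sqrt (∑ k, X k j ^ 2))
    (hhμ : (h : ℝ) < 1 + 1 / μ) :
    IsCompact {u : Fin p → ℝ |
      (∀ i, (∑ j, X i j * u j) ∈ Set.Icc a b) ∧
      (Finset.univ.filter fun j => u j ≠ 0).card ≤ h} := by
  set c : Fin p → ℝ := fun j => Real.sqrt (∑ k, X k j ^ 2) with hcdef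
  have hcpos : ∀ j, 0 < c j := by
    intro j
    obtain ⟨i, hi⟩ := hcol j
    exact Real.sqrt_pos.2 (Finset.sum_pos' (fun k _ => sq_nonneg _)
      ⟨i, Finset.mem_univ i, by positivity⟩)
  have hcsq : ∀ j, c j ^ 2 = ∑ k, X k j ^ 2 := by
    intro j
    exact Real.sq_sqrt (Finset.sum_nonneg fun k _ => sq_nonneg _)
  set M := max |a| |b| with hM
  set ν := 1 + μ - μ * h with hν
  have hνpos : 0 < ν := by
    have h1 : μ * h < μ * (1 + 1 / μ) := (mul_lt_mul_iff_right₀ hμ).2 hhμ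
    have h2 : μ * (1 + 1 / μ) = μ + 1 := by field_simp
    rw [hν]; linarith
  set C := n * M ^ 2 / ν with hC
  have hCnn : 0 ≤ C := by positivity
  set R := Real.sqrt (C * ∑ j, (1 / c j) ^ 2) with hR
  have hRnn : 0 ≤ R := Real.sqrt_nonneg _
  apply Metric.isCompact_of_isClosed_isBounded
  · -- closedness
    have : {u : Fin p → ℝ |
        (∀ i, (∑ j, X i j * u j) ∈ Set.Icc a b) ∧
        (Finset.univ.filter fun j => u j ≠ 0).card ≤ h} =
        (⋂ i, (fun u : Fin p → ℝ => ∑ j, X i j * u j) ⁻¹' Set.Icc a b) ∩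
        (⋃ S ∈ {S : Finset (Fin p) | S.card ≤ h}, {u : Fin p → ℝ | ∀ j ∉ S, u j = 0}) := by
      ext u
      simp only [Set.mem_setOf_eq, Set.mem_inter_iff, Set.mem_iInter, Set.mem_preimage,
        Set.mem_iUnion]
      constructor
      · rintro ⟨h1, h2⟩
        refine ⟨h1, Finset.univ.filter fun j => u j ≠ 0, h2, fun j hj => ?_⟩
        simpa using hj
      · rintro ⟨h1, S, hS, hS2⟩
        refine ⟨h1, le_trans (Finset.card_le_card ?_) hS⟩
        intro j hj
        simp only [Finset.mem_filter, Finset.mem_univ, true_and] at hj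
        by_contra hjS
        exact hj (hS2 j hjS)
    rw [this]
    apply IsClosed.inter
    · apply isClosed_iInter
      intro i
      exact IsClosed.preimage (by continuity) isClosed_Icc
    · apply Set.Finite.isClosed_biUnion (Set.toFinite _)
      intro S _
      have : {u : Fin p → ℝ | ∀ j ∉ S, u j = 0} =
          ⋂ j ∈ {j | j ∉ S}, {u : Fin p → ℝ | u j = 0} := by
        ext u; simp [Set.mem_iInter]
      rw [this]
      apply isClosed_biInter
      intro j _
      exact isClosed_eq (continuous_apply j) continuous_const
  · -- boundedness
    rw [isBounded_iff_forall_norm_le]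
    refine ⟨R, ?_⟩
    rintro u ⟨hu1, hu2⟩
    rw [pi_norm_le_iff_of_nonneg hRnn]
    intro j
    rw [Real.norm_eq_abs]
    -- key estimate
    set w : Fin p → ℝ := fun j => |u j| * c j with hw
    have hwnn : ∀ j, 0 ≤ w j := fun j => mul_nonneg (abs_nonneg _) (hcpos j).le
    -- Step A
    have stepA : (∑ i, (∑ j, X i j * u j) ^ 2) ≤ n * M ^ 2 := by
      have : ∀ i ∈ Finset.univ, (∑ j, X i j * u j) ^ 2 ≤ M ^ 2 := by
        intro i _
        obtain ⟨h1, h2⟩ := hu1 i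
        have hMa : |a| ≤ M := le_max_left _ _
        have hMb : |b| ≤ M := le_max_right _ _
        have := neg_abs_le a
        have := le_abs_self b
        apply sq_le_sq'
        · linarith
        · linarith
      calc (∑ i, (∑ j, X i j * u j) ^ 2) ≤ Finset.univ.card • M ^ 2 :=
            Finset.sum_le_card_nsmul _ _ _ this
        _ = n * M ^ 2 := by simp [nsmul_eq_mul]
    -- Step B: expansion
    have expand : (∑ i, (∑ j, X i j * u j) ^ 2) =
        ∑ j, ∑ j', u j * u j' * (∑ i, X i j * X i j') := by
      have h1 : ∀ i, (∑ j, X i j * u j) ^ 2 =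
          ∑ j, ∑ j', u j * u j' * (X i j * X i j') := by
        intro i
        rw [sq, Finset.sum_mul_sum]
        exact Finset.sum_congr rfl fun j _ => Finset.sum_congr rfl fun j' _ => by ring
      simp_rw [h1, Finset.mul_sum]
      rw [Finset.sum_comm]
      refine Finset.sum_congr rfl fun j _ => ?_
      rw [Finset.sum_comm]
    -- Step C: lower bound
    have stepC : (1 + μ) * (∑ j, w j ^ 2) - μ * (∑ j, w j) ^ 2 ≤
        ∑ j, ∑ j', u j * u j' * (∑ i, X i j * X i j') := by
      have termwise : ∀ j ∈ Finset.univ, ∀ j' ∈ Finset.univ,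
          ((1 + μ) * (if j = j' then w j * w j' else 0) - μ * (w j * w j')) ≤
          u j * u j' * (∑ i, X i j * X i j') := by
        intro j _ j' _
        by_cases hjj : j = j'
        · subst hjj
          simp only [eq_self_iff_true, if_true]
          have heq : u j * u j * (∑ i, X i j * X i j) = w j * w j := by
            simp_rw [hw]
            have hG : (∑ i, X i j * X i j) = c j ^ 2 := by
              rw [hcsq]; exact Finset.sum_congr rfl fun i _ => (sq (X i j)).symm
            rw [hG]
            rw [← abs_mul_abs_self (u j)]
            ring
          have h2 : (1 + μ) * (w j * w j) - μ * (w j * w j) = w j * w j := by ring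
          rw [h2]
          exact le_of_eq heq.symm
        · simp only [if_neg hjj]
          have hco := hcoh j j' hjj
          calc (1 + μ) * 0 - μ * (w j * w j') = -(|u j| * |u j'| * (μ * c j * c j')) := by
                simp_rw [hw]; ring
            _ ≤ -(|u j| * |u j'| * |∑ i, X i j * X i j'|) := by
                apply neg_le_neg
                exact mul_le_mul_of_nonneg_left hco (by positivity)
            _ = -(|u j * u j' * (∑ i, X i j * X i j')|) := by
                rw [abs_mul, abs_mul]
            _ ≤ u j * u j' * (∑ i, X i j * X i j') := neg_abs_le _
      have hsum := Finset.sum_le_sum fun j hj =>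
        Finset.sum_le_sum (termwise j hj)
      refine le_trans (le_of_eq ?_) hsum
      rw [eq_comm]
      have diag : ∀ j : Fin p, (∑ j', (if j = j' then w j * w j' else 0)) = w j ^ 2 := by
        intro j
        rw [Finset.sum_ite_eq]
        simp [sq]
      calc ∑ j, ∑ j', ((1 + μ) * (if j = j' then w j * w j' else 0) - μ * (w j * w j'))
          = (1 + μ) * (∑ j, ∑ j', (if j = j' then w j * w j' else 0))
            - μ * (∑ j, ∑ j', w j * w j') := by
            simp_rw [Finset.sum_sub_distrib, Finset.mul_sum]
        _ = (1 + μ) * (∑ j, w j ^ 2) - μ * (∑ j, w j) ^ 2 := by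
            rw [Finset.sum_congr rfl fun j _ => diag j, ← Finset.sum_mul_sum, sq]
    -- Step D: Cauchy-Schwarz on support
    have stepD : (∑ j, w j) ^ 2 ≤ (h : ℝ) * ∑ j, w j ^ 2 := by
      set S := Finset.univ.filter fun j => u j ≠ 0 with hS
      have hzero : ∀ j ∈ Finset.univ, j ∉ S → w j = 0 := by
        intro j _ hj
        simp only [hS, Finset.mem_filter, Finset.mem_univ, true_and, not_not] at hj
        simp [hw, hj]
      have hsum : (∑ j, w j) = ∑ j ∈ S, w j :=
        (Finset.sum_subset (Finset.subset_univ S) hzero).symm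
      rw [hsum]
      calc (∑ j ∈ S, w j) ^ 2 ≤ S.card * ∑ j ∈ S, w j ^ 2 := sq_sum_le_card_mul_sum_sq
        _ ≤ (h : ℝ) * ∑ j, w j ^ 2 := by
            apply mul_le_mul
            · exact_mod_cast hu2
            · exact Finset.sum_le_sum_of_subset_of_nonneg (Finset.subset_univ S)
                fun j _ _ => sq_nonneg _
            · exact Finset.sum_nonneg fun j _ => sq_nonneg _
            · positivity
      done
    -- combine
    have hsumw : ν * (∑ j, w j ^ 2) ≤ n * M ^ 2 := by
      have h1 : ν * (∑ j, w j ^ 2) ≤ (1 + μ) * (∑ j, w j ^ 2) - μ * (∑ j, w j) ^ 2 := by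
        rw [hν]; nlinarith [stepD]
      linarith [h1, stepC.trans_eq expand.symm, stepA]
    have hsq : w j ^ 2 ≤ C := by
      have h1 : w j ^ 2 ≤ ∑ j', w j' ^ 2 :=
        Finset.single_le_sum (f := fun j' => w j' ^ 2) (fun j' _ => sq_nonneg _)
          (Finset.mem_univ j)
      rw [hC, le_div_iff₀ hνpos]
      nlinarith [hsumw]
    have habs : |u j| ^ 2 ≤ C * ∑ j', (1 / c j') ^ 2 := by
      have h1 : |u j| ^ 2 = w j ^ 2 * (1 / c j) ^ 2 := by
        simp_rw [hw]
        rw [mul_pow, div_pow, one_pow, mul_one_div, mul_div_assoc,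
          div_self (pow_ne_zero 2 (hcpos j).ne'), mul_one]
      have h2 : (1 / c j) ^ 2 ≤ ∑ j', (1 / c j') ^ 2 :=
        Finset.single_le_sum (f := fun j' => (1 / c j') ^ 2) (fun j' _ => sq_nonneg _)
          (Finset.mem_univ j)
      calc |u j| ^ 2 = w j ^ 2 * (1 / c j) ^ 2 := h1
        _ ≤ C * ∑ j', (1 / c j') ^ 2 :=
            mul_le_mul hsq h2 (sq_nonneg _) hCnn
    rw [hR]
    exact (Real.le_sqrt (abs_nonneg _) (mul_nonneg hCnn (Finset.sum_nonneg fun _ _ => sq_nonneg _))).2 habs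
end

section
/- Suppose the random vector ε ∈ ℝⁿ satisfies: for all t and all a ∈ ℝⁿ, P{(Σᵢ aᵢεᵢ)² > t² Σᵢ aᵢ²} ≤ 2exp(-t²/(2σ²)). Let X be an n×p matrix with columns V_j and q ∈ (0,1/2). Then with probability at least 1-2q, ‖Xᵀε‖_∞ ≤ σ√(2ln(p/q)) · max_j ‖V_j‖₂, and consequently for all u ∈ ℝᵖ, |⟨ε, (Xu - Xβ)/2⟩| ≤ (σ/2)√(2ln(p/q)) max_j‖V_j‖₂ · ‖u-β‖₁. -/
/-!
Each column `Vⱼ` of `X` gives the scalar `⟨Vⱼ, ε⟩`, and the sub-Gaussian tail bound at the level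
`t = σ√(2 ln(p/q))` makes `⟨Vⱼ, ε⟩² > t² ‖Vⱼ‖²` an event of probability at most `2q/p`. A union
bound over the `p` columns leaves probability at least `1 - 2q` for `‖Xᵀε‖_∞ ≤ t maxⱼ ‖Vⱼ‖₂`, and
on that event Hölder's inequality `|⟨Xᵀε, w⟩| ≤ ‖Xᵀε‖_∞ ‖w‖₁` with `w = (u - β)/2` gives the rest.
-/

open MeasureTheory Matrix

theorem one_sub_card_mul_le_measure_iInter {Ω ι : Type*} [MeasurableSpace Ω] [Fintype ι]
    {μ : Measure Ω} [IsProbabilityMeasure μ] {s : ι → Set Ω} {δ : ENNReal}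
    (h : ∀ i, μ (s i)ᶜ ≤ δ) : 1 - Fintype.card ι * δ ≤ μ (⋂ i, s i) := by
  have hcompl : μ (⋂ i, s i)ᶜ ≤ Fintype.card ι * δ :=
    calc μ (⋂ i, s i)ᶜ = μ (⋃ i, (s i)ᶜ) := by rw [Set.compl_iInter]
      _ ≤ ∑ i, μ (s i)ᶜ := measure_iUnion_fintype_le μ _
      _ ≤ ∑ _i : ι, δ := Finset.sum_le_sum fun i _ => h i
      _ = Fintype.card ι * δ := by rw [Finset.sum_const, Finset.card_univ, nsmul_eq_mul]
  rw [tsub_le_iff_right, ← measure_univ (μ := μ)]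
  exact (measure_univ_le_add_compl _).trans (add_le_add_right hcompl _)

theorem ofReal_one_sub_le_measure_iInter {Ω ι : Type*} [MeasurableSpace Ω] [Fintype ι]
    [Nonempty ι] {μ : Measure Ω} [IsProbabilityMeasure μ] {s : ι → Set Ω} {δ : ℝ} (hδ : 0 ≤ δ)
    (h : ∀ i, μ (s i)ᶜ ≤ ENNReal.ofReal (δ / Fintype.card ι)) :
    ENNReal.ofReal (1 - δ) ≤ μ (⋂ i, s i) := by
  have hcard : (Fintype.card ι : ℝ) ≠ 0 := Nat.cast_ne_zero.mpr Fintype.card_ne_zero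
  convert one_sub_card_mul_le_measure_iInter h using 1
  rw [← ENNReal.ofReal_natCast, ← ENNReal.ofReal_mul (Nat.cast_nonneg _),
    mul_div_cancel₀ _ hcard, ENNReal.ofReal_sub _ hδ, ENNReal.ofReal_one]

theorem Real.exp_neg_sq_mul_sqrt_two_log_div {σ r : ℝ} (hσ : σ ≠ 0) (hr : 1 ≤ r) :
    Real.exp (-(σ * √(2 * Real.log r)) ^ 2 / (2 * σ ^ 2)) = r⁻¹ := by
  have hlog : 0 ≤ Real.log r := Real.log_nonneg hr
  rw [mul_pow, Real.sq_sqrt (by positivity),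
    show -(σ ^ 2 * (2 * Real.log r)) / (2 * σ ^ 2) = -Real.log r by field_simp,
    Real.exp_neg, Real.exp_log (by linarith)]

theorem abs_dotProduct_le_mul_sum_abs {n : Type*} [Fintype n] {v w : n → ℝ} {C : ℝ}
    (hv : ∀ j, |v j| ≤ C) : |v ⬝ᵥ w| ≤ C * ∑ j, |w j| :=
  calc |v ⬝ᵥ w| ≤ ∑ j, |v j * w j| := Finset.abs_sum_le_sum_abs _ _
    _ ≤ ∑ j, C * |w j| := Finset.sum_le_sum fun j _ => by
        rw [abs_mul]; exact mul_le_mul_of_nonneg_right (hv j) (abs_nonneg _)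
    _ = C * ∑ j, |w j| := (Finset.mul_sum _ _ _).symm

theorem abs_dotProduct_mulVec_le {m n : Type*} [Fintype m] [Fintype n] {ε : m → ℝ}
    {X : Matrix m n ℝ} {C : ℝ} (hC : ∀ j, |(ε ᵥ* X) j| ≤ C) (w : n → ℝ) :
    |ε ⬝ᵥ (X *ᵥ w)| ≤ C * ∑ j, |w j| := by
  rw [dotProduct_mulVec]
  exact abs_dotProduct_le_mul_sum_abs hC

theorem abs_le_mul_sqrt_of_sq_le_sq_mul {x t s : ℝ} (ht : 0 ≤ t)
    (h : x ^ 2 ≤ t ^ 2 * s) : |x| ≤ t * √s := by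
  calc |x| ≤ √(t ^ 2 * s) := Real.abs_le_sqrt h
    _ = t * √s := by rw [Real.sqrt_mul (sq_nonneg t), Real.sqrt_sq ht]

theorem abs_vecMul_le_mul_sup'_sqrt_sum_sq {m n : Type*} [Fintype m] [Fintype n]
    (hn : (Finset.univ : Finset n).Nonempty) {ε : m → ℝ} {X : Matrix m n ℝ} {t : ℝ} (ht : 0 ≤ t)
    (h : ∀ j, (∑ i, X i j * ε i) ^ 2 ≤ t ^ 2 * ∑ i, X i j ^ 2) (j : n) :
    |(ε ᵥ* X) j| ≤ t * Finset.univ.sup' hn fun j' => √(∑ i, X i j' ^ 2) := by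
  have hcol : |(ε ᵥ* X) j| ≤ t * √(∑ i, X i j ^ 2) := by
    simp only [vecMul, dotProduct, mul_comm (ε _)]
    exact abs_le_mul_sqrt_of_sq_le_sq_mul ht (h j)
  exact hcol.trans (mul_le_mul_of_nonneg_left
    (Finset.le_sup' (fun j' => √(∑ i, X i j' ^ 2)) (Finset.mem_univ j)) ht)

theorem subgaussian_sup_bound_general {Ω : Type*} [MeasurableSpace Ω] (P : Measure Ω)
    [IsProbabilityMeasure P] (n p : ℕ)
    (hnep : (Finset.univ : Finset (Fin p)).Nonempty)
    (ε : Ω → Fin n → ℝ) (σ : ℝ) (hσ : 0 < σ)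
    (X : Matrix (Fin n) (Fin p) ℝ) (β : Fin p → ℝ)
    (q : ℝ) (hq0 : 0 < q) (hq1 : q < 1 / 2)
    (htail : ∀ (t : ℝ) (a : Fin n → ℝ),
      P {ω | t ^ 2 * ∑ i, a i ^ 2 < (∑ i, a i * ε ω i) ^ 2}
        ≤ ENNReal.ofReal (2 * Real.exp (-t ^ 2 / (2 * σ ^ 2)))) :
    ENNReal.ofReal (1 - 2 * q) ≤
      P {ω |
        (∀ j, |∑ i, ε ω i * X i j| ≤
          σ * Real.sqrt (2 * Real.log (p / q)) *
            Finset.univ.sup' hnep fun j' => Real.sqrt (∑ i, X i j' ^ 2)) ∧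
        ∀ u : Fin p → ℝ,
          |∑ i, ε ω i * (((∑ j, X i j * u j) - ∑ j, X i j * β j) / 2)| ≤
            σ / 2 * Real.sqrt (2 * Real.log (p / q)) *
              (Finset.univ.sup' hnep fun j' => Real.sqrt (∑ i, X i j' ^ 2)) *
              ∑ j, |u j - β j|} := by
  set t := σ * Real.sqrt (2 * Real.log (p / q))
  have hne : Nonempty (Fin p) := Finset.univ_nonempty_iff.mp hnep
  have hpq : 1 ≤ (p : ℝ) / q := by
    rw [le_div_iff₀ hq0]
    linarith [show (1 : ℝ) ≤ p by exact_mod_cast Fin.pos_iff_nonempty.mpr hne]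
  have hcol : ∀ j, P {ω | (∑ i, X i j * ε ω i) ^ 2 ≤ t ^ 2 * ∑ i, X i j ^ 2}ᶜ
      ≤ ENNReal.ofReal (2 * q / Fintype.card (Fin p)) := fun j => by
    rw [Set.compl_ofPred, Fintype.card_fin, mul_div_assoc, ← inv_div,
      ← Real.exp_neg_sq_mul_sqrt_two_log_div hσ.ne' hpq]
    simpa only [not_le] using htail t fun i => X i j
  refine (ofReal_one_sub_le_measure_iInter (by positivity) hcol).trans
    (measure_mono fun ω hω => ?_)
  simp only [Set.mem_iInter, Set.mem_ofPred_eq] at hω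
  have hXε := abs_vecMul_le_mul_sup'_sqrt_sum_sq hnep (by positivity) hω
  refine ⟨hXε, fun u => ?_⟩
  have hsum : ∑ i, ε ω i * (((∑ j, X i j * u j) - ∑ j, X i j * β j) / 2)
      = ε ω ⬝ᵥ (X *ᵥ (u - β)) / 2 := by
    simp only [mulVec_sub, dotProduct, Finset.sum_div, mul_div_assoc]
    rfl
  rw [hsum, abs_div, abs_two]
  calc |ε ω ⬝ᵥ (X *ᵥ (u - β))| / 2
      ≤ t * (Finset.univ.sup' hnep fun j' => √(∑ i, X i j' ^ 2)) * (∑ j, |(u - β) j|) / 2 :=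
        div_le_div_of_nonneg_right (abs_dotProduct_mulVec_le hXε _) zero_le_two
    _ = _ := by simp only [Pi.sub_apply, t]; ring

/-- Under the sub-Gaussian tail assumption, with probability at least `1-2q`,
`‖Xᵀε‖_∞ ≤ σ√(2 ln(p/q)) maxⱼ‖Vⱼ‖₂`, and consequently for all `u`,
`|⟨ε, (Xu - Xβ)/2⟩| ≤ (σ/2)√(2 ln(p/q)) maxⱼ‖Vⱼ‖₂ ‖u-β‖₁`. -/
theorem subgaussian_sup_bound {Ω : Type*} [MeasurableSpace Ω] (P : Measure Ω)
    [IsProbabilityMeasure P] (n p : ℕ) (hp : 0 < p)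
    (hnep : (Finset.univ : Finset (Fin p)).Nonempty)
    (ε : Ω → Fin n → ℝ) (σ : ℝ) (hσ : 0 < σ)
    (X : Matrix (Fin n) (Fin p) ℝ) (β : Fin p → ℝ)
    (q : ℝ) (hq0 : 0 < q) (hq1 : q < 1 / 2)
    (htail : ∀ (t : ℝ) (a : Fin n → ℝ),
      P {ω | t ^ 2 * ∑ i, a i ^ 2 < (∑ i, a i * ε ω i) ^ 2}
        ≤ ENNReal.ofReal (2 * Real.exp (-t ^ 2 / (2 * σ ^ 2)))) :
    ENNReal.ofReal (1 - 2 * q) ≤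
      P {ω |
        (∀ j, |∑ i, ε ω i * X i j| ≤
          σ * Real.sqrt (2 * Real.log (p / q)) *
            Finset.univ.sup' hnep fun j' => Real.sqrt (∑ i, X i j' ^ 2)) ∧
        ∀ u : Fin p → ℝ,
          |∑ i, ε ω i * (((∑ j, X i j * u j) - ∑ j, X i j * β j) / 2)| ≤
            σ / 2 * Real.sqrt (2 * Real.log (p / q)) *
              (Finset.univ.sup' hnep fun j' => Real.sqrt (∑ i, X i j' ^ 2)) *
              ∑ j, |u j - β j|} :=
  subgaussian_sup_bound_general P n p hnep ε σ hσ X β q hq0 hq1 htail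
end

section
/- Let f be analytic on an open set N ⊂ ℂ containing ℝ, with ρ̄₀ := inf_{x∈ℝ} rc(f,x) > 0 (rc denotes radius of convergence of the Taylor series) and with sup_{|Im z| ≤ c}|f'(z)| < ∞ for every c ∈ (0, ρ̄₀). Set d̄_k = sup_{x∈ℝ}|f^{(k)}(x)|/k!. Then the radius of convergence of the power series Σ_{k≥1} d̄_k z^k equals ρ̄₀. -/
/-!
For `c < r < ρ̄₀` the closed disc of radius `r` about a real point lies in the strip
`|Im z| ≤ r`, where `f'` is bounded by some `M`; Cauchy's estimate for `f'` gives
`|f^{(k+1)}(x)| / (k+1)! ≤ M / r^k` uniformly in `x`, so `Σ d̄_{k+1} c^{k+1}` is dominated by a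
geometric series. Conversely, for `c > ρ̄₀` some `rc(f,x) < c`, and `d̄_k` dominates the Taylor
coefficients of `f` at `x`, so `Σ d̄_k c^k` cannot converge.
-/

open Metric Nat

lemma abs_im_le_of_mem_closedBall_ofReal {x r : ℝ} {z : ℂ} (hz : z ∈ closedBall (x : ℂ) r) :
    |z.im| ≤ r := by
  simpa using (Complex.abs_im_le_norm (z - x)).trans (mem_closedBall_iff_norm.mp hz)

lemma norm_iteratedDeriv_succ_div_factorial_le {f : ℂ → ℂ} {c : ℂ} {r M : ℝ} (hr : 0 < r)
    (hf : DiffContOnCl ℂ (deriv f) (ball c r)) (hM : ∀ z ∈ sphere c r, ‖deriv f z‖ ≤ M)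
    (k : ℕ) : ‖iteratedDeriv (k + 1) f c‖ / (k + 1)! ≤ M / r ^ k := by
  rw [iteratedDeriv_succ']
  calc ‖iteratedDeriv k (deriv f) c‖ / (k + 1)!
      ≤ ‖iteratedDeriv k (deriv f) c‖ / k ! := by gcongr; exact k.le_succ
    _ ≤ M / r ^ k := by
      rw [div_le_iff₀ (by positivity), div_mul_eq_mul_div, mul_comm]
      exact Complex.norm_iteratedDeriv_le_of_forall_mem_sphere_norm_le k hr hf hM

lemma norm_iteratedDeriv_succ_div_factorial_le_of_strip {f : ℂ → ℂ} {N : Set ℂ} (hN : IsOpen N)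
    (hf : DifferentiableOn ℂ f N) {r M : ℝ} (hr : 0 < r) (hstrip : ∀ z : ℂ, |z.im| ≤ r → z ∈ N)
    (hM : ∀ z : ℂ, |z.im| ≤ r → ‖deriv f z‖ ≤ M) (x : ℝ) (k : ℕ) :
    ‖iteratedDeriv (k + 1) f x‖ / (k + 1)! ≤ M / r ^ k := by
  have hdisc : closedBall (x : ℂ) r ⊆ N := fun z hz =>
    hstrip z (abs_im_le_of_mem_closedBall_ofReal hz)
  have hf' : DifferentiableOn ℂ (deriv f) N := (hf.analyticOnNhd hN).deriv.differentiableOn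
  exact norm_iteratedDeriv_succ_div_factorial_le hr (hf'.diffContOnCl_ball hdisc)
    (fun z hz => hM z (abs_im_le_of_mem_closedBall_ofReal (sphere_subset_closedBall hz))) k

lemma summable_mul_pow_succ_of_le_div_pow {a : ℕ → ℝ} {M r c : ℝ} (ha₀ : ∀ k, 0 ≤ a k)
    (ha : ∀ k, a k ≤ M / r ^ k) (hc : 0 ≤ c) (hcr : c < r) :
    Summable fun k => a k * c ^ (k + 1) := by
  have hr : 0 < r := hc.trans_lt hcr
  have hgeom : Summable fun k : ℕ => M * c * (c / r) ^ k :=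
    (summable_geometric_of_lt_one (by positivity) ((div_lt_one hr).mpr hcr)).mul_left _
  refine hgeom.of_nonneg_of_le (fun k => by have := ha₀ k; positivity) fun k => ?_
  calc a k * c ^ (k + 1) ≤ M / r ^ k * c ^ (k + 1) := by gcongr; exact ha k
    _ = M * c * (c / r) ^ k := by rw [div_pow, pow_succ]; ring

theorem radius_of_sup_deriv_series_general (f : ℂ → ℂ) (N : Set ℂ) (hN : IsOpen N)
    (hf : DifferentiableOn ℂ f N)
    (rc : ℝ → ℝ)
    (hrc : ∀ x : ℝ,
      (∀ c : ℝ, 0 ≤ c → c < rc x →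
        Summable fun k : ℕ => ‖iteratedDeriv k f (x : ℂ)‖ / (k.factorial : ℝ) * c ^ k) ∧
      (∀ c : ℝ, rc x < c →
        ¬ Summable fun k : ℕ => ‖iteratedDeriv k f (x : ℂ)‖ / (k.factorial : ℝ) * c ^ k))
    (ρ : ℝ) (hρ : IsGLB (Set.range rc) ρ) (hρpos : 0 < ρ)
    (hstrip : ∀ c : ℝ, 0 < c → c < ρ →
      (∀ z : ℂ, |z.im| ≤ c → z ∈ N) ∧ ∃ M : ℝ, ∀ z : ℂ, |z.im| ≤ c → ‖deriv f z‖ ≤ M)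
    (d : ℕ → ℝ)
    (hd : ∀ k : ℕ, 1 ≤ k →
      IsLUB (Set.range fun x : ℝ => ‖iteratedDeriv k f (x : ℂ)‖ / (k.factorial : ℝ)) (d k)) :
    (∀ c : ℝ, 0 ≤ c → c < ρ → Summable fun k : ℕ => d (k + 1) * c ^ (k + 1)) ∧
    (∀ c : ℝ, ρ < c → ¬ Summable fun k : ℕ => d (k + 1) * c ^ (k + 1)) := by
  have hd_nonneg (k : ℕ) : 0 ≤ d (k + 1) :=
    (by positivity : (0 : ℝ) ≤ _).trans ((hd (k + 1) k.succ_pos).1 ⟨0, rfl⟩)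
  refine ⟨fun c hc hcρ => ?_, fun c hρc hsum => ?_⟩
  · obtain ⟨r, hcr, hrρ⟩ := exists_between hcρ
    have hr : 0 < r := hc.trans_lt hcr
    obtain ⟨hsub, M, hM⟩ := hstrip r hr hrρ
    refine summable_mul_pow_succ_of_le_div_pow (M := M) hd_nonneg
      (fun k => (hd (k + 1) k.succ_pos).2 ?_) hc hcr
    rintro _ ⟨x, rfl⟩
    exact norm_iteratedDeriv_succ_div_factorial_le_of_strip hN hf hr hsub hM x k
  · obtain ⟨_, ⟨x, rfl⟩, -, hx⟩ := hρ.exists_between hρc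
    have hc : 0 ≤ c := (hρpos.trans hρc).le
    refine (hrc x).2 c hx <| (summable_nat_add_iff 1).1 <|
      hsum.of_nonneg_of_le (fun k => by positivity) fun k => ?_
    exact mul_le_mul_of_nonneg_right ((hd (k + 1) k.succ_pos).1 ⟨x, rfl⟩) (pow_nonneg hc _)

/-- If `f` is analytic on an open set containing `ℝ` with `ρ̄₀ = inf_x rc(f,x) > 0` and
`f'` bounded on every horizontal strip of half-width `< ρ̄₀`, then the radius of
convergence of `Σ_{k≥1} d̄_k z^k`, `d̄_k = sup_x |f⁽ᵏ⁾(x)|/k!`, equals `ρ̄₀`. -/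
theorem radius_of_sup_deriv_series (f : ℂ → ℂ) (N : Set ℂ) (hN : IsOpen N)
    (hNreal : ∀ x : ℝ, (x : ℂ) ∈ N) (hf : DifferentiableOn ℂ f N)
    (rc : ℝ → ℝ) (hrcnn : ∀ x, 0 ≤ rc x)
    (hrc : ∀ x : ℝ,
      (∀ c : ℝ, 0 ≤ c → c < rc x →
        Summable fun k : ℕ => ‖iteratedDeriv k f (x : ℂ)‖ / (k.factorial : ℝ) * c ^ k) ∧
      (∀ c : ℝ, rc x < c →
        ¬ Summable fun k : ℕ => ‖iteratedDeriv k f (x : ℂ)‖ / (k.factorial : ℝ) * c ^ k))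
    (ρ : ℝ) (hρ : IsGLB (Set.range rc) ρ) (hρpos : 0 < ρ)
    (hstrip : ∀ c : ℝ, 0 < c → c < ρ →
      (∀ z : ℂ, |z.im| ≤ c → z ∈ N) ∧ ∃ M : ℝ, ∀ z : ℂ, |z.im| ≤ c → ‖deriv f z‖ ≤ M)
    (d : ℕ → ℝ)
    (hd : ∀ k : ℕ, 1 ≤ k →
      IsLUB (Set.range fun x : ℝ => ‖iteratedDeriv k f (x : ℂ)‖ / (k.factorial : ℝ)) (d k)) :
    (∀ c : ℝ, 0 ≤ c → c < ρ → Summable fun k : ℕ => d (k + 1) * c ^ (k + 1)) ∧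
    (∀ c : ℝ, ρ < c → ¬ Summable fun k : ℕ => d (k + 1) * c ^ (k + 1)) :=
  radius_of_sup_deriv_series_general f N hN hf rc hrc ρ hρ hρpos hstrip d hd
end

section
/- Let f be analytic in an open set N ⊂ ℂ containing a compact interval I ⊂ ℝ, with rc(f,x) > 0 for every x ∈ I. Then ρ₀ := inf_{x∈I} rc(f,x) > 0, and ρ₀ equals the radius of convergence of the series Σ_{k≥1} d_k z^k with d_k = sup_{x∈I}|f^{(k)}(x)|/k!. -/
/-!
Near a point `x`, the Taylor series of `f` at `y` is the re-expansion (`changeOrigin`) of the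
series at `x`, so for `r < rc x` the weighted coefficients `‖f⁽ⁿ⁾(y)‖ / n! * rⁿ` are bounded
uniformly for `y` near `x`. Hence `rc` is lower semicontinuous on `[a, b]` and attains a
positive minimum `ρ₀`; for `r < ρ₀` compactness makes the bound uniform on `[a, b]`, giving
`d n ≤ C / rⁿ`. Beyond `ρ₀`, `d n` dominates the coefficients at the minimum point, whose
series diverges.
-/

open Filter Topology Set
open scoped NNReal ENNReal Nat

theorem summable_mul_pow_of_mul_pow_le {a : ℕ → ℝ} {r c C : ℝ} (ha : ∀ n, 0 ≤ a n)
    (hb : ∀ n, a n * r ^ n ≤ C) (hc : 0 ≤ c) (hcr : c < r) :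
    Summable fun n => a n * c ^ n := by
  have hr : 0 < r := hc.trans_lt hcr
  refine .of_nonneg_of_le (fun n => mul_nonneg (ha n) (pow_nonneg hc n)) (fun n => ?_)
    ((summable_geometric_of_lt_one (div_nonneg hc hr.le) ((div_lt_one hr).2 hcr)).mul_left C)
  calc a n * c ^ n = a n * r ^ n * (c / r) ^ n := by
        rw [div_pow, mul_assoc, mul_div_cancel₀ _ (pow_pos hr n).ne']
    _ ≤ C * (c / r) ^ n := by gcongr; exact hb n

theorem le_of_mul_pow_le_of_not_summable {a : ℕ → ℝ} {R r C : ℝ} (ha : ∀ n, 0 ≤ a n)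
    (hR : 0 ≤ R) (hb : ∀ n, a n * r ^ n ≤ C)
    (hns : ∀ c, R < c → ¬ Summable fun n => a n * c ^ n) : r ≤ R := by
  by_contra! hRr
  obtain ⟨c, hRc, hcr⟩ := exists_between hRr
  exact hns c hRc (summable_mul_pow_of_mul_pow_le ha hb (hR.trans hRc.le) hcr)

theorem IsCompact.exists_forall_le_of_eventually {X ι β : Type*} [TopologicalSpace X]
    [SemilatticeSup β] [Nonempty β] {K : Set X} (hK : IsCompact K) {g : X → ι → β}
    (h : ∀ x ∈ K, ∃ C, ∀ᶠ y in 𝓝 x, ∀ i, g y i ≤ C) : ∃ C, ∀ y ∈ K, ∀ i, g y i ≤ C := by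
  refine hK.induction_on (p := fun s => ∃ C, ∀ y ∈ s, ∀ i, g y i ≤ C)
    ⟨Classical.arbitrary β, by simp⟩ (fun s t hst ⟨C, hC⟩ => ⟨C, fun y hy => hC y (hst hy)⟩)
    (fun s t ⟨C, hC⟩ ⟨D, hD⟩ => ⟨C ⊔ D, ?_⟩) fun x hx => ?_
  · rintro y (hy | hy) i
    exacts [le_sup_of_le_left (hC y hy i), le_sup_of_le_right (hD y hy i)]
  · obtain ⟨C, hC⟩ := h x hx
    exact ⟨_, mem_nhdsWithin_of_mem_nhds hC, C, fun y hy => hy⟩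

section ChangeOrigin

variable {𝕜 E F : Type*} [NontriviallyNormedField 𝕜] [NormedAddCommGroup E] [NormedSpace 𝕜 E]
  [NormedAddCommGroup F] [NormedSpace 𝕜 F]

theorem FormalMultilinearSeries.nnnorm_changeOrigin_mul_pow_le
    {p : FormalMultilinearSeries 𝕜 E F} {δ r : ℝ≥0} (h : (δ + r : ℝ≥0∞) < p.radius) {x : E}
    (hx : ‖x‖₊ ≤ δ) (k : ℕ) :
    ‖p.changeOrigin x k‖₊ * r ^ k ≤ ∑' s : Σ k l : ℕ, { s : Finset (Fin (k + l)) // s.card = l },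
      ‖p (s.1 + s.2.1)‖₊ * δ ^ s.2.1 * r ^ s.1 := by
  have hδ : (δ : ℝ≥0∞) < p.radius := le_self_add.trans_lt h
  calc ‖p.changeOrigin x k‖₊ * r ^ k
      ≤ (∑' s : Σ l : ℕ, { s : Finset (Fin (k + l)) // s.card = l },
          ‖p (k + s.1)‖₊ * ‖x‖₊ ^ s.1) * r ^ k := by
        gcongr
        exact p.nnnorm_changeOrigin_le k ((ENNReal.coe_le_coe.2 hx).trans_lt hδ)
    _ ≤ (∑' s : Σ l : ℕ, { s : Finset (Fin (k + l)) // s.card = l },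
          ‖p (k + s.1)‖₊ * δ ^ s.1) * r ^ k := by
        have hsum := p.changeOriginSeries_summable_aux₂ hδ k
        gcongr
        exact NNReal.summable_of_le (fun s => by gcongr) hsum
    _ = ∑' s : Σ l : ℕ, { s : Finset (Fin (k + l)) // s.card = l },
          ‖p (k + s.1)‖₊ * δ ^ s.1 * r ^ k := (NNReal.tsum_mul_right _ _).symm
    _ ≤ _ := NNReal.tsum_comp_le_tsum_of_inj (i := Sigma.mk k)
          (p.changeOriginSeries_summable_aux₁ h) sigma_mk_injective

end ChangeOrigin

section PowerSeriesAt

variable {𝕜 F : Type*} [NontriviallyNormedField 𝕜] [NormedAddCommGroup F] [NormedSpace 𝕜 F]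
  [CompleteSpace F]

theorem HasFPowerSeriesAt.exists_eventually_norm_mul_pow_le {f : 𝕜 → F}
    {p : FormalMultilinearSeries 𝕜 𝕜 F} {x : 𝕜} (hp : HasFPowerSeriesAt f p x) {r : ℝ≥0}
    (hr : (r : ℝ≥0∞) < p.radius) :
    ∃ C, ∀ᶠ y in 𝓝 x, ∀ q : FormalMultilinearSeries 𝕜 𝕜 F, HasFPowerSeriesAt f q y →
      ∀ n, ‖q n‖ * r ^ n ≤ C := by
  obtain ⟨R, hR⟩ := hp
  obtain ⟨δ, hδ0, hδ⟩ := ENNReal.lt_iff_exists_add_pos_lt.1 hr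
  refine ⟨∑' s : Σ k l : ℕ, { s : Finset (Fin (k + l)) // s.card = l },
      ‖p (s.1 + s.2.1)‖₊ * δ ^ s.2.1 * r ^ s.1, ?_⟩
  filter_upwards [Metric.eball_mem_nhds x hR.r_pos, Metric.ball_mem_nhds x hδ0]
    with y hyR hyδ q hq n
  have hyx : (‖y - x‖₊ : ℝ≥0∞) < R := by rwa [Metric.mem_eball, edist_nndist, nndist_eq_nnnorm] at hyR
  have hq : q = p.changeOrigin (y - x) :=
    hq.eq_formalMultilinearSeries (by simpa using (hR.changeOrigin hyx).hasFPowerSeriesAt)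
  subst hq
  exact_mod_cast p.nnnorm_changeOrigin_mul_pow_le (by rwa [add_comm])
    (by rw [← NNReal.coe_le_coe, coe_nnnorm, ← dist_eq_norm]; exact hyδ.le) n

end PowerSeriesAt

section RCLike

variable {𝕜 : Type*} [RCLike 𝕜] {f : 𝕜 → 𝕜}

theorem AnalyticAt.exists_eventually_norm_iteratedDeriv_mul_pow_le {x : 𝕜}
    (hf : AnalyticAt 𝕜 f x) {r R : ℝ} (hr : 0 ≤ r) (hrR : r < R)
    (hR : Summable fun n => ‖iteratedDeriv n f x‖ / n ! * R ^ n) :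
    ∃ C, ∀ᶠ y in 𝓝 x, ∀ n, ‖iteratedDeriv n f y‖ / n ! * r ^ n ≤ C := by
  have hnorm (y : 𝕜) (n : ℕ) : ‖FormalMultilinearSeries.ofScalars 𝕜
      (fun n => iteratedDeriv n f y / n !) n‖ = ‖iteratedDeriv n f y‖ / n ! := by
    rw [FormalMultilinearSeries.ofScalars_norm, norm_div, RCLike.norm_natCast]
  lift r to ℝ≥0 using hr
  lift R to ℝ≥0 using (r.2.trans hrR.le)
  have hrad : (r : ℝ≥0∞) < (FormalMultilinearSeries.ofScalars 𝕜
      (fun n => iteratedDeriv n f x / n !)).radius :=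
    (ENNReal.coe_lt_coe.2 hrR).trans_le (FormalMultilinearSeries.le_radius_of_summable _
      (by simpa only [hnorm] using hR))
  obtain ⟨C, hC⟩ := hf.hasFPowerSeriesAt.exists_eventually_norm_mul_pow_le hrad
  refine ⟨C, ?_⟩
  filter_upwards [hC, hf.eventually_analyticAt] with y hyC hy n
  simpa only [hnorm] using hyC _ hy.hasFPowerSeriesAt n

def IsTaylorRadius (f : 𝕜 → 𝕜) (x : 𝕜) (R : ℝ) : Prop :=
  (∀ c : ℝ, 0 ≤ c → c < R → Summable fun n : ℕ => ‖iteratedDeriv n f x‖ / n ! * c ^ n) ∧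
    ∀ c : ℝ, R < c → ¬ Summable fun n : ℕ => ‖iteratedDeriv n f x‖ / n ! * c ^ n

variable {K : Set ℝ} {rc : ℝ → ℝ} (hf : ∀ x ∈ K, AnalyticAt 𝕜 f x)
  (hrc : ∀ x ∈ K, IsTaylorRadius f x (rc x))
include hf hrc

theorem exists_eventually_norm_iteratedDeriv_mul_pow_le_of_lt {x : ℝ} (hx : x ∈ K) {r : ℝ}
    (hr : 0 ≤ r) (hrx : r < rc x) :
    ∃ C, ∀ᶠ y : ℝ in 𝓝 x, ∀ n, ‖iteratedDeriv n f y‖ / n ! * r ^ n ≤ C := by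
  obtain ⟨R, hrR, hRx⟩ := exists_between hrx
  obtain ⟨C, hC⟩ := (hf x hx).exists_eventually_norm_iteratedDeriv_mul_pow_le hr hrR
    ((hrc x hx).1 R (hr.trans hrR.le) hRx)
  exact ⟨C, (RCLike.continuous_ofReal.tendsto x).eventually hC⟩

theorem lowerSemicontinuousOn_of_isTaylorRadius (hpos : ∀ x ∈ K, 0 < rc x) :
    LowerSemicontinuousOn rc K := by
  intro x hx r hr
  obtain ⟨r', hr', hr'x⟩ := exists_between (max_lt hr (hpos x hx))
  obtain ⟨C, hC⟩ := exists_eventually_norm_iteratedDeriv_mul_pow_le_of_lt hf hrc hx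
    ((le_max_right r 0).trans hr'.le) hr'x
  filter_upwards [nhdsWithin_le_nhds hC, self_mem_nhdsWithin] with y hyC hy
  exact ((le_max_left r 0).trans_lt hr').trans_le <| le_of_mul_pow_le_of_not_summable
    (fun n => by positivity) (hpos y hy).le hyC (hrc y hy).2

theorem IsCompact.exists_forall_norm_iteratedDeriv_mul_pow_le (hK : IsCompact K) {r : ℝ}
    (hr : 0 ≤ r) (hrK : ∀ x ∈ K, r < rc x) :
    ∃ C, ∀ y ∈ K, ∀ n, ‖iteratedDeriv n f y‖ / n ! * r ^ n ≤ C :=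
  hK.exists_forall_le_of_eventually fun x hx =>
    exists_eventually_norm_iteratedDeriv_mul_pow_le_of_lt hf hrc hx hr (hrK x hx)

end RCLike

/-- If `f` is analytic on an open set containing the compact interval `[a,b]` with
`rc(f,x) > 0` for each `x ∈ [a,b]`, then `ρ₀ = inf_{x∈[a,b]} rc(f,x) > 0` and `ρ₀`
equals the radius of convergence of `Σ_{k≥1} d_k z^k`, `d_k = sup_{x∈[a,b]} |f⁽ᵏ⁾(x)|/k!`. -/
theorem radius_of_sup_deriv_series_compact (f : ℂ → ℂ) (N : Set ℂ) (hN : IsOpen N)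
    (a b : ℝ) (hab : a ≤ b)
    (hIN : ∀ x ∈ Set.Icc a b, (x : ℂ) ∈ N) (hf : DifferentiableOn ℂ f N)
    (rc : ℝ → ℝ)
    (hrc : ∀ x ∈ Set.Icc a b,
      (∀ c : ℝ, 0 ≤ c → c < rc x →
        Summable fun k : ℕ => ‖iteratedDeriv k f (x : ℂ)‖ / (k.factorial : ℝ) * c ^ k) ∧
      (∀ c : ℝ, rc x < c →
        ¬ Summable fun k : ℕ => ‖iteratedDeriv k f (x : ℂ)‖ / (k.factorial : ℝ) * c ^ k))
    (hrcpos : ∀ x ∈ Set.Icc a b, 0 < rc x)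
    (d : ℕ → ℝ)
    (hd : ∀ k : ℕ, 1 ≤ k →
      IsLUB ((fun x : ℝ => ‖iteratedDeriv k f (x : ℂ)‖ / (k.factorial : ℝ)) '' Set.Icc a b)
        (d k)) :
    0 < sInf (rc '' Set.Icc a b) ∧
    (∀ c : ℝ, 0 ≤ c → c < sInf (rc '' Set.Icc a b) →
      Summable fun k : ℕ => d (k + 1) * c ^ (k + 1)) ∧
    (∀ c : ℝ, sInf (rc '' Set.Icc a b) < c →
      ¬ Summable fun k : ℕ => d (k + 1) * c ^ (k + 1)) := by
  have hfa : ∀ x ∈ Icc a b, AnalyticAt ℂ f x := fun x hx =>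
    hf.analyticAt (hN.mem_nhds (hIN x hx))
  obtain ⟨x₀, hx₀, hmin⟩ := (lowerSemicontinuousOn_of_isTaylorRadius hfa hrc hrcpos).exists_isMinOn
    (nonempty_Icc.2 hab) isCompact_Icc
  have hρ : sInf (rc '' Icc a b) = rc x₀ :=
    IsLeast.csInf_eq ⟨mem_image_of_mem rc hx₀, forall_mem_image.2 fun x hx => hmin hx⟩
  rw [hρ]
  refine ⟨hrcpos x₀ hx₀, fun c hc hcρ => ?_, fun c hρc hsum => ?_⟩
  · obtain ⟨r, hcr, hrρ⟩ := exists_between hcρ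
    have hr : 0 < r := hc.trans_lt hcr
    obtain ⟨C, hC⟩ := isCompact_Icc.exists_forall_norm_iteratedDeriv_mul_pow_le hfa hrc hr.le
      fun x hx => hrρ.trans_le (hmin hx)
    have hdC (n : ℕ) : d (n + 1) * r ^ n ≤ C / r := by
      rw [le_div_iff₀ hr, mul_assoc, ← pow_succ, ← le_div_iff₀ (pow_pos hr _)]
      exact (hd (n + 1) n.succ_pos).2 <| forall_mem_image.2 fun x hx =>
        (le_div_iff₀ (pow_pos hr _)).2 (hC x hx (n + 1))
    have hd0 (n : ℕ) : 0 ≤ d (n + 1) :=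
      (by positivity : (0 : ℝ) ≤ _).trans ((hd (n + 1) n.succ_pos).1 (mem_image_of_mem _ hx₀))
    simpa only [mul_assoc, ← pow_succ] using
      (summable_mul_pow_of_mul_pow_le hd0 hdC hc hcr).mul_right c
  · have hc : 0 ≤ c := (hrcpos x₀ hx₀).le.trans hρc.le
    refine (hrc x₀ hx₀).2 c hρc <| (summable_nat_add_iff 1).1 <|
      hsum.of_nonneg_of_le (fun n => by positivity) fun n => ?_
    gcongr
    exact (hd (n + 1) n.succ_pos).1 (mem_image_of_mem _ hx₀)
end
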